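/- arXiv:1107.3834 — 3 statements merged into one kernel-verified Lean document; each statement's English description precedes it below -/
import Mathlib

section
/- Let O9 = {3,5,6,9,15,19,23,24}, which is an octad of the Golay code. Define Π̃ = { ν ∈ N : ⟨ν, f_n⟩ = 0 for all n ∈ O9 } and K̃ = { ν ∈ N : ⟨ν, f_n⟩ = 0 for all n ∉ O9 }. Then Π̃ and K̃ are primitive sublattices of N of ranks 16 and 8 respectively, and each is the orthogonal complement of the other in N. -/
def indic (s : Finset ℕ) : Fin 24 → ZMod 2 := fun i => if (i : ℕ) + 1 ∈ s then 1 else 0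

def golayBasisSets : Fin 12 → Finset ℕ :=
  ![{1,2,16,18,5,12,22,3}, {7,4,19,10,12,15,8,16}, {23,3,9,19,13,18,8,11},
    {6,3,22,4,21,17,15,9}, {20,10,11,17,14,13,22,12}, {24,2,10,19,9,5,14,21},
    {8,7,15,17,11,23,18,16}, {16,1,2,21,4,7,8,18}, {18,1,16,8,23,13,14,5},
    {8,7,15,9,19,23,4,22,13,18,1,16}, {18,23,13,22,3,1,11,10,2,16,7,8},
    {16,1,2,10,12,7,5,9,15,8,23,18}]

def golayCode : Submodule (ZMod 2) (Fin 24 → ZMod 2) :=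
  Submodule.span (ZMod 2) (Set.range fun i => indic (golayBasisSets i))

/-- The ambient 24-dimensional rational quadratic space. -/
abbrev V24 := Fin 24 → ℚ

/-- The bilinear form on `V24` for which the standard basis vectors have norm 2. -/
def B24 (u v : V24) : ℚ := 2 * ∑ i, u i * v i

/-- The generators `f_n` of the root sublattice `R` of type `A₁²⁴`. -/
def f24 (n : Fin 24) : V24 := fun i => if i = n then 1 else 0

/-- The Niemeier lattice `N` of type `A₁²⁴`:
`N = { v ∈ (1/2)R : (v mod R) ∈ 𝒢₂₄ }`. -/
def NSet : Set V24 :=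
  { v | ∃ w : Fin 24 → ℤ, (∀ i, v i = (w i : ℚ) / 2) ∧
      (fun i => ((w i : ZMod 2))) ∈ golayCode }


/-- The weight of a vector in `𝔽₂²⁴`: the number of nonzero coordinates. -/
def weight (v : Fin 24 → ZMod 2) : ℕ := (Finset.univ.filter fun i => v i ≠ 0).card

/-- The special octad `𝒪₉ = {3,5,6,9,15,19,23,24}` (as a set of labels in `{1,…,24}`). -/
def O9 : Finset ℕ := {3, 5, 6, 9, 15, 19, 23, 24}

/-- `Π̃ = { ν ∈ N : ⟨ν, f_n⟩ = 0 for all n ∈ 𝒪₉ }`. -/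
def PiTilde : Set V24 :=
  { ν | ν ∈ NSet ∧ ∀ n : Fin 24, (n : ℕ) + 1 ∈ O9 → B24 ν (f24 n) = 0 }

/-- `K̃ = { ν ∈ N : ⟨ν, f_n⟩ = 0 for all n ∉ 𝒪₉ }`. -/
def KTilde : Set V24 :=
  { ν | ν ∈ NSet ∧ ∀ n : Fin 24, (n : ℕ) + 1 ∉ O9 → B24 ν (f24 n) = 0 }

/-!
`Π̃` and `K̃` are the vectors of `N` vanishing on the coordinates of `𝒪₉`, resp. off them. Since
`N` contains every `f_n`, both are primitive and each is the orthogonal complement of the other.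

For a basis of the vectors `w / 2 ∈ N` vanishing on a coordinate set `S`, pick free coordinates
`F` and codewords `g_j` (`j ∈ F`) vanishing on `S` with `g_j = e_j` on `F`. Subtracting
`∑_{j ∈ F} w_j g_j` from `w` leaves a vector reducing to a codeword that vanishes on `S ∪ F`.
That codeword is zero: for each remaining coordinate `k`, some octad is orthogonal to the code and
meets the remaining coordinates exactly in `k`. Hence the `g_j / 2` and the `f_k`, `k ∉ S ∪ F`,
form a `ℤ`-basis. For `Π̃` take `F = {1, 2, 4, 7, 10}`; for `K̃` take `F = {3}` and `g_3 = 𝒪₉`.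
-/

section ConstructionA

variable {ι : Type*}

/-- Construction A of a binary code, in coordinates where the roots `f_i` are the unit vectors. -/
def constructionA (C : Submodule (ZMod 2) (ι → ZMod 2)) : AddSubgroup (ι → ℚ) where
  carrier := {v | ∃ w : ι → ℤ, (∀ i, v i = w i / 2) ∧ (fun i => (w i : ZMod 2)) ∈ C}
  zero_mem' := ⟨0, by simp, by simp only [Pi.zero_apply, Int.cast_zero]; exact C.zero_mem⟩
  add_mem' := by
    rintro v v' ⟨w, hw, hwC⟩ ⟨w', hw', hwC'⟩
    refine ⟨w + w', fun i => ?_, ?_⟩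
    · simp only [Pi.add_apply, hw, hw', Int.cast_add, add_div]
    · convert C.add_mem hwC hwC' using 1
      funext i
      simp
  neg_mem' := by
    rintro v ⟨w, hw, hwC⟩
    refine ⟨-w, fun i => ?_, ?_⟩
    · simp only [Pi.neg_apply, hw, Int.cast_neg, neg_div]
    · convert C.neg_mem hwC using 1
      funext i
      simp

theorem single_mem_constructionA [DecidableEq ι] (C : Submodule (ZMod 2) (ι → ZMod 2)) (j : ι) :
    Pi.single j 1 ∈ constructionA C := by
  refine ⟨Pi.single j 2, fun i => ?_, ?_⟩
  · by_cases h : i = j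
    · subst h; simp
    · simp [h]
  · convert C.zero_mem using 1
    funext i
    by_cases h : i = j
    · subst h; simpa using ZMod.natCast_self 2
    · simp [h]

def vanishingOn (L : Set (ι → ℚ)) (S : Finset ι) : Set (ι → ℚ) :=
  {v | v ∈ L ∧ ∀ i ∈ S, v i = 0}

theorem mem_vanishingOn_of_zsmul_mem {L : Set (ι → ℚ)} {S : Finset ι} {v : ι → ℚ} (hv : v ∈ L)
    {k : ℤ} (hk : k ≠ 0) (hkv : (k : ℚ) • v ∈ vanishingOn L S) : v ∈ vanishingOn L S :=
  ⟨hv, fun i hi => (mul_eq_zero.mp (hkv.2 i hi)).resolve_left (Int.cast_ne_zero.mpr hk)⟩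

theorem sum_zsmul_mem_vanishingOn {κ : Type*} [Fintype κ] {L : AddSubgroup (ι → ℚ)}
    {S : Finset ι} {b : κ → ι → ℚ} (hb : ∀ j, b j ∈ vanishingOn L S) (c : κ → ℤ) :
    ∑ j, c j • b j ∈ vanishingOn L S :=
  ⟨L.sum_mem fun j _ => L.zsmul_mem (hb j).1 _, fun i hi => by
    simp [Finset.sum_apply, (hb _).2 i hi]⟩

theorem vanishingOn_eq_orthogonal [Fintype ι] [DecidableEq ι] {L : Set (ι → ℚ)}
    (hL : ∀ i, Pi.single i 1 ∈ L) (S : Finset ι) :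
    vanishingOn L S = {v | v ∈ L ∧ ∀ w ∈ vanishingOn L Sᶜ, v ⬝ᵥ w = 0} := by
  ext v
  refine ⟨fun ⟨hvL, hvS⟩ => ⟨hvL, fun w ⟨_, hwS⟩ => Finset.sum_eq_zero fun i _ => ?_⟩,
    fun ⟨hvL, hv⟩ => ⟨hvL, fun i hi => ?_⟩⟩
  · by_cases hi : i ∈ S
    · rw [hvS i hi, zero_mul]
    · rw [hwS i (Finset.mem_compl.mpr hi), mul_zero]
  · have hsingle : Pi.single i 1 ∈ vanishingOn L Sᶜ :=
      ⟨hL i, fun j hj => Pi.single_eq_of_ne (by rintro rfl; exact Finset.mem_compl.mp hj hi) _⟩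
    simpa using hv _ hsingle

theorem dotProduct_eq_zero_of_mem_span [Fintype ι] {R : Type*} [CommSemiring R]
    {s : Set (ι → R)} {h : ι → R} (hs : ∀ x ∈ s, x ⬝ᵥ h = 0) {c : ι → R}
    (hc : c ∈ Submodule.span R s) : c ⬝ᵥ h = 0 := by
  induction hc using Submodule.span_induction with
  | mem x hx => exact hs x hx
  | zero => exact zero_dotProduct h
  | add x y _ _ hx hy => rw [add_dotProduct, hx, hy, add_zero]
  | smul a x _ hx => rw [smul_dotProduct, hx, smul_zero]

theorem eq_zero_of_dotProduct_eq_zero [Fintype ι] [DecidableEq ι] {R : Type*} [Semiring R]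
    {T : Finset ι} {H : ι → ι → R} (hHT : ∀ k ∈ T, ∀ i ∈ T, H k i = if i = k then 1 else 0)
    {c : ι → R} (hcT : ∀ i ∉ T, c i = 0) (hcH : ∀ k ∈ T, c ⬝ᵥ H k = 0) : c = 0 := by
  funext k
  by_cases hk : k ∈ T
  · rw [Pi.zero_apply, ← hcH k hk, dotProduct, Finset.sum_eq_single k, hHT k hk k hk, if_pos rfl,
      mul_one]
    · refine fun i _ hik => ?_
      by_cases hi : i ∈ T
      · rw [hHT k hk i hi, if_neg hik, mul_zero]
      · rw [hcT i hi, zero_mul]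
    · exact fun h => absurd (Finset.mem_univ k) h
  · exact hcT k hk

def systematicBasis [DecidableEq ι] {F T : Finset ι} (g : ι → ι → ℤ) : F ⊕ T → ι → ℚ :=
  Sum.elim (fun j i => (g j i : ℚ) / 2) (fun k => Pi.single (k : ι) 1)

theorem systematicBasis_mem_vanishingOn [Fintype ι] [DecidableEq ι]
    {C : Submodule (ZMod 2) (ι → ZMod 2)} {S F : Finset ι} {g : ι → ι → ℤ}
    (hgC : ∀ j ∈ F, (fun i => (g j i : ZMod 2)) ∈ C) (hgS : ∀ j ∈ F, ∀ i ∈ S, g j i = 0)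
    (j : F ⊕ ↥(S ∪ F)ᶜ) : systematicBasis g j ∈ vanishingOn (constructionA C) S := by
  rcases j with ⟨j, hj⟩ | ⟨k, hk⟩
  · exact ⟨⟨g j, fun i => rfl, hgC j hj⟩, fun i hi => by simp [systematicBasis, hgS j hj i hi]⟩
  · refine ⟨single_mem_constructionA C k, fun i hi => Pi.single_eq_of_ne ?_ _⟩
    rintro rfl
    exact Finset.mem_compl.mp hk (Finset.mem_union_left F hi)

theorem sum_zsmul_systematicBasis_apply [Fintype ι] [DecidableEq ι] {F T : Finset ι}
    (g : ι → ι → ℤ) (a t : ι → ℤ) (ht : ∀ i ∉ T, t i = 0) (i : ι) :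
    (∑ j : F ⊕ T, Sum.elim (fun j : F => a j) (fun k : T => t k) j • systematicBasis g j) i =
      ((∑ j ∈ F, a j * g j i + 2 * t i : ℤ) : ℚ) / 2 := by
  simp only [Fintype.sum_sum_type, Finset.sum_apply, Pi.smul_apply, systematicBasis,
    Sum.elim_inl, Sum.elim_inr]
  simp only [Pi.single_apply, smul_ite, smul_zero, zsmul_eq_mul, mul_one]
  rw [Finset.sum_coe_sort F (fun j => (a j : ℚ) * (g j i / 2)),
    Finset.sum_coe_sort T (fun k => if i = k then (t k : ℚ) else 0), Finset.sum_ite_eq]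
  have hti : (if i ∈ T then (t i : ℚ) else 0) = t i := by
    split_ifs with hi
    · rfl
    · rw [ht i hi, Int.cast_zero]
  rw [hti]
  push_cast
  rw [add_div, Finset.sum_div]
  simp_rw [mul_div_assoc]
  ring

theorem exists_eq_sum_add_two_mul [Fintype ι] [DecidableEq ι]
    {C : Submodule (ZMod 2) (ι → ZMod 2)} {S F : Finset ι} {g : ι → ι → ℤ}
    (hgC : ∀ j ∈ F, (fun i => (g j i : ZMod 2)) ∈ C) (hgS : ∀ j ∈ F, ∀ i ∈ S, g j i = 0)
    (hgF : ∀ j ∈ F, ∀ i ∈ F, g j i = if i = j then 1 else 0)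
    (hC : ∀ c ∈ C, (∀ i ∈ S ∪ F, c i = 0) → c = 0) {w : ι → ℤ}
    (hwC : (fun i => (w i : ZMod 2)) ∈ C) (hwS : ∀ i ∈ S, w i = 0) :
    ∃ t : ι → ℤ, (∀ i ∈ S ∪ F, t i = 0) ∧ ∀ i, w i = ∑ j ∈ F, w j * g j i + 2 * t i := by
  set u : ι → ℤ := fun i => w i - ∑ j ∈ F, w j * g j i
  have huC : (fun i => (u i : ZMod 2)) ∈ C := by
    have : (fun i => (u i : ZMod 2)) =
        (fun i => (w i : ZMod 2)) - ∑ j ∈ F, (w j : ZMod 2) • fun i => (g j i : ZMod 2) := by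
      funext i
      simp [u, Finset.sum_apply]
    rw [this]
    exact C.sub_mem hwC (C.sum_mem fun j hj => C.smul_mem _ (hgC j hj))
  have huSF : ∀ i ∈ S ∪ F, u i = 0 := by
    intro i hi
    show w i - ∑ j ∈ F, w j * g j i = 0
    rcases Finset.mem_union.mp hi with hiS | hiF
    · rw [hwS i hiS, Finset.sum_eq_zero fun j hj => by rw [hgS j hj i hiS, mul_zero], sub_zero]
    · rw [Finset.sum_congr rfl fun j hj => by rw [hgF j hj i hiF, mul_ite, mul_one, mul_zero],
        Finset.sum_ite_eq, if_pos hiF, sub_self]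
  have hu_even := hC _ huC fun i hi => by rw [huSF i hi, Int.cast_zero]
  choose t ht using fun i => (ZMod.intCast_zmod_eq_zero_iff_dvd (u i) 2).mp (congrFun hu_even i)
  refine ⟨t, fun i hi => ?_, fun i => ?_⟩
  · have := ht i
    rw [huSF i hi] at this
    omega
  · have := ht i
    push_cast [u] at this
    linarith

theorem vanishingOn_constructionA_eq_span [Fintype ι] [DecidableEq ι]
    (C : Submodule (ZMod 2) (ι → ZMod 2)) (S F : Finset ι) (g : ι → ι → ℤ)
    (hgC : ∀ j ∈ F, (fun i => (g j i : ZMod 2)) ∈ C) (hgS : ∀ j ∈ F, ∀ i ∈ S, g j i = 0)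
    (hgF : ∀ j ∈ F, ∀ i ∈ F, g j i = if i = j then 1 else 0)
    (hC : ∀ c ∈ C, (∀ i ∈ S ∪ F, c i = 0) → c = 0) :
    vanishingOn (constructionA C) S =
      {v | ∃ c : F ⊕ ↥(S ∪ F)ᶜ → ℤ, v = ∑ j, c j • systematicBasis g j} := by
  ext v
  constructor
  · rintro ⟨⟨w, hw, hwC⟩, hvS⟩
    have hwS : ∀ i ∈ S, w i = 0 := fun i hi => by
      have := hvS i hi
      rw [hw, div_eq_zero_iff] at this
      exact_mod_cast this.resolve_right two_ne_zero
    obtain ⟨t, htSF, hwt⟩ := exists_eq_sum_add_two_mul hgC hgS hgF hC hwC hwS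
    refine ⟨Sum.elim (fun j => w j) (fun k => t k), funext fun i => ?_⟩
    rw [sum_zsmul_systematicBasis_apply (T := (S ∪ F)ᶜ) g w t
      (fun i hi => htSF i (Finset.notMem_compl.mp hi)), hw, ← hwt]
  · rintro ⟨c, rfl⟩
    exact sum_zsmul_mem_vanishingOn (systematicBasis_mem_vanishingOn hgC hgS) c

end ConstructionA

theorem setOf_exists_sum_zsmul_equiv {κ κ' M : Type*} [Fintype κ] [Fintype κ'] [AddCommGroup M]
    (b : κ → M) (e : κ' ≃ κ) :
    {v | ∃ c : κ → ℤ, v = ∑ j, c j • b j} = {v | ∃ c : κ' → ℤ, v = ∑ j, c j • b (e j)} := by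
  ext v
  constructor
  · rintro ⟨c, rfl⟩
    exact ⟨c ∘ e, (e.sum_comp fun j => c j • b j).symm⟩
  · rintro ⟨c, rfl⟩
    exact ⟨c ∘ e.symm, by rw [← e.sum_comp]; simp⟩

def labelCoords (s : Finset ℕ) : Finset (Fin 24) := Finset.univ.filter fun i => (i : ℕ) + 1 ∈ s

def intIndic (s : Finset ℕ) : Fin 24 → ℤ := fun i => if (i : ℕ) + 1 ∈ s then 1 else 0

theorem intCast_intIndic (s : Finset ℕ) : (fun i => (intIndic s i : ZMod 2)) = indic s := by
  funext i
  unfold intIndic indic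
  split_ifs <;> simp

theorem mem_golayCode_of_eq_sum {x : Fin 24 → ZMod 2} (t : Finset (Fin 12))
    (h : x = ∑ n ∈ t, indic (golayBasisSets n)) : x ∈ golayCode :=
  h ▸ Submodule.sum_mem _ fun n _ => Submodule.subset_span ⟨n, rfl⟩

theorem golayCode_eq_zero_of_parityChecks {S F : Finset (Fin 24)} (H : ℕ → Finset ℕ)
    (hH : ∀ k ∈ (S ∪ F)ᶜ, ∀ n, indic (golayBasisSets n) ⬝ᵥ indic (H ((k : ℕ) + 1)) = 0)
    (hHT : ∀ k ∈ (S ∪ F)ᶜ, ∀ i ∈ (S ∪ F)ᶜ, indic (H ((k : ℕ) + 1)) i = if i = k then 1 else 0) :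
    ∀ c ∈ golayCode, (∀ i ∈ S ∪ F, c i = 0) → c = 0 := fun c hc hcSF =>
  eq_zero_of_dotProduct_eq_zero hHT (fun i hi => hcSF i (Finset.notMem_compl.mp hi))
    fun k hk => dotProduct_eq_zero_of_mem_span (by rintro _ ⟨n, rfl⟩; exact hH k hk n) hc

theorem exists_basis_vanishingOn_NSet (S F : Finset (Fin 24)) {m : ℕ}
    (hm : F.card + (S ∪ F)ᶜ.card = m) (G H : ℕ → Finset ℕ) (combo : ℕ → Finset (Fin 12))
    (hGC : ∀ j ∈ F,
      indic (G ((j : ℕ) + 1)) = ∑ n ∈ combo ((j : ℕ) + 1), indic (golayBasisSets n))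
    (hGS : ∀ j ∈ F, ∀ i ∈ S, intIndic (G ((j : ℕ) + 1)) i = 0)
    (hGF : ∀ j ∈ F, ∀ i ∈ F, intIndic (G ((j : ℕ) + 1)) i = if i = j then 1 else 0)
    (hH : ∀ k ∈ (S ∪ F)ᶜ, ∀ n, indic (golayBasisSets n) ⬝ᵥ indic (H ((k : ℕ) + 1)) = 0)
    (hHT : ∀ k ∈ (S ∪ F)ᶜ, ∀ i ∈ (S ∪ F)ᶜ, indic (H ((k : ℕ) + 1)) i = if i = k then 1 else 0) :
    ∃ b : Fin m → V24, vanishingOn NSet S = {v | ∃ c : Fin m → ℤ, v = ∑ i, c i • b i} := by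
  have hcard : Fintype.card (F ⊕ ↥(S ∪ F)ᶜ) = m := by
    rw [Fintype.card_sum, Fintype.card_coe, Fintype.card_coe, hm]
  have hgC (j : Fin 24) (hj : j ∈ F) :
      (fun i => (intIndic (G ((j : ℕ) + 1)) i : ZMod 2)) ∈ golayCode := by
    rw [intCast_intIndic]
    exact mem_golayCode_of_eq_sum _ (hGC j hj)
  exact ⟨_, (vanishingOn_constructionA_eq_span golayCode S F
    (fun j => intIndic (G ((j : ℕ) + 1))) hgC hGS hGF
    (golayCode_eq_zero_of_parityChecks H hH hHT)).trans
    (setOf_exists_sum_zsmul_equiv _ (Fintype.equivFinOfCardEq hcard).symm)⟩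

/- Tables indexed by coordinate labels, as `O9`. The free coordinates of `Π̃` are
`{1, 2, 4, 7, 10}`: `piFreeOctad j` is the octad disjoint from `𝒪₉` that meets them in `{j}`,
`piFreeOctadCombo j` writes it as a sum of the `golayBasisSets`, and `piParityCheck k` is an
octad meeting the other eleven labels off `𝒪₉` in `{k}`. `kParityCheck k` is an octad meeting
`𝒪₉` in `{3, k}`. -/

def piFreeOctad : ℕ → Finset ℕ
  | 1 => {1, 8, 12, 14, 18, 20, 21, 22}
  | 2 => {2, 11, 12, 16, 17, 18, 20, 21}
  | 4 => {4, 8, 11, 12, 13, 16, 18, 22}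
  | 7 => {7, 8, 12, 13, 14, 16, 17, 21}
  | 10 => {10, 11, 12, 13, 14, 17, 20, 22}
  | _ => ∅

def piFreeOctadCombo : ℕ → Finset (Fin 12)
  | 1 => {2, 4, 6, 7, 9, 10}
  | 2 => {1, 2, 4, 7, 8, 10, 11}
  | 4 => {0, 1, 2, 11}
  | 7 => {0, 2, 6, 7, 8, 9}
  | 10 => {4}
  | _ => ∅

def piParityCheck : ℕ → Finset ℕ
  | 8 => {1, 3, 4, 6, 7, 8, 9, 19}
  | 11 => {2, 3, 4, 9, 10, 11, 15, 19}
  | 12 => {1, 2, 3, 4, 7, 10, 12, 23}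
  | 13 => {4, 7, 9, 10, 13, 19, 23, 24}
  | 14 => {1, 5, 6, 7, 9, 10, 14, 23}
  | 16 => {2, 4, 6, 7, 9, 15, 16, 23}
  | 17 => {2, 3, 6, 7, 9, 10, 17, 24}
  | 18 => {1, 2, 4, 5, 9, 18, 19, 23}
  | 20 => {1, 2, 9, 10, 15, 20, 23, 24}
  | 21 => {1, 2, 3, 5, 7, 9, 15, 21}
  | 22 => {1, 4, 6, 10, 15, 19, 22, 23}
  | _ => ∅

def kParityCheck : ℕ → Finset ℕ
  | 5 => {1, 2, 3, 5, 12, 16, 18, 22}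
  | 6 => {1, 2, 3, 6, 8, 12, 17, 21}
  | 9 => {2, 3, 7, 8, 9, 11, 12, 16}
  | 15 => {1, 2, 3, 10, 13, 15, 17, 22}
  | 19 => {1, 3, 4, 10, 13, 16, 18, 19}
  | 23 => {2, 3, 8, 12, 13, 14, 22, 23}
  | 24 => {1, 2, 3, 10, 11, 16, 21, 24}
  | _ => ∅

theorem indic_O9_eq_sum :
    indic O9 = ∑ n ∈ ({0, 1, 2, 3, 5, 6, 8} : Finset (Fin 12)), indic (golayBasisSets n) := by
  decide

theorem exists_basis_vanishingOn_O9 :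
    ∃ b : Fin 16 → V24, vanishingOn NSet (labelCoords O9) =
      {v | ∃ c : Fin 16 → ℤ, v = ∑ i, c i • b i} :=
  exists_basis_vanishingOn_NSet _ (labelCoords {1, 2, 4, 7, 10}) (by decide) piFreeOctad
    piParityCheck piFreeOctadCombo (by decide) (by decide) (by decide) (by decide) (by decide)

theorem exists_basis_vanishingOn_compl_O9 :
    ∃ b : Fin 8 → V24, vanishingOn NSet (labelCoords O9)ᶜ =
      {v | ∃ c : Fin 8 → ℤ, v = ∑ i, c i • b i} :=
  exists_basis_vanishingOn_NSet _ (labelCoords {3}) (by decide) (fun _ => O9) kParityCheck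
    (fun _ => {0, 1, 2, 3, 5, 6, 8}) (fun _ _ => indic_O9_eq_sum) (by decide) (by decide)
    (by decide) (by decide)

theorem B24_f24 (v : V24) (n : Fin 24) : B24 v (f24 n) = 2 * v n := by
  simp [B24, f24]

theorem B24_eq_zero_iff (u v : V24) : B24 u v = 0 ↔ u ⬝ᵥ v = 0 := by
  simp [B24, dotProduct]

theorem PiTilde_eq_vanishingOn : PiTilde = vanishingOn NSet (labelCoords O9) := by
  ext v
  simp [PiTilde, vanishingOn, labelCoords, B24_f24]

theorem KTilde_eq_vanishingOn : KTilde = vanishingOn NSet (labelCoords O9)ᶜ := by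
  ext v
  simp [KTilde, vanishingOn, labelCoords, B24_f24]

theorem vanishingOn_NSet_eq_B24_orthogonal (S : Finset (Fin 24)) :
    vanishingOn NSet S = {v | v ∈ NSet ∧ ∀ w ∈ vanishingOn NSet Sᶜ, B24 v w = 0} := by
  simp_rw [B24_eq_zero_iff]
  exact vanishingOn_eq_orthogonal (single_mem_constructionA golayCode) S

/-- `𝒪₉` is an octad of the Golay code, and `Π̃` and `K̃` are primitive sublattices of
the Niemeier lattice `N` of type `A₁²⁴`, of ranks 16 and 8 respectively, each being the
orthogonal complement of the other in `N`. -/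
theorem piTilde_kTilde_primitive_orthogonal :
    (indic O9 ∈ golayCode ∧ weight (indic O9) = 8) ∧
    (∀ v ∈ NSet, (∃ k : ℤ, k ≠ 0 ∧ (k : ℚ) • v ∈ PiTilde) → v ∈ PiTilde) ∧
    (∀ v ∈ NSet, (∃ k : ℤ, k ≠ 0 ∧ (k : ℚ) • v ∈ KTilde) → v ∈ KTilde) ∧
    (∃ b : Fin 16 → V24, PiTilde = { v | ∃ c : Fin 16 → ℤ, v = ∑ i, c i • b i }) ∧
    (∃ b : Fin 8 → V24, KTilde = { v | ∃ c : Fin 8 → ℤ, v = ∑ i, c i • b i }) ∧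
    PiTilde = { v | v ∈ NSet ∧ ∀ w ∈ KTilde, B24 v w = 0 } ∧
    KTilde = { v | v ∈ NSet ∧ ∀ w ∈ PiTilde, B24 v w = 0 } := by
  rw [PiTilde_eq_vanishingOn, KTilde_eq_vanishingOn]
  have hKPi := vanishingOn_NSet_eq_B24_orthogonal (labelCoords O9)ᶜ
  rw [compl_compl] at hKPi
  exact ⟨⟨mem_golayCode_of_eq_sum _ indic_O9_eq_sum, by decide⟩,
    fun v hv ⟨k, hk, hkv⟩ => mem_vanishingOn_of_zsmul_mem hv hk hkv,
    fun v hv ⟨k, hk, hkv⟩ => mem_vanishingOn_of_zsmul_mem hv hk hkv,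
    exists_basis_vanishingOn_O9, exists_basis_vanishingOn_compl_O9,
    vanishingOn_NSet_eq_B24_orthogonal _, hKPi⟩
end

section
/- The map sending E_{I(n)} to f_n for each n in the complement of the octad O9 extends to an isometry from the Kummer lattice Π onto Π̃(-1), where Π̃ = span_Z{ f_n (n ∉ O9); (1/2)Σ_{n ∈ H_i} f_n (i=1,...,5) }. -/
/-- The five octads `ℋ₁, …, ℋ₅` disjoint from `𝒪₉`. -/
def Hocts : Fin 5 → Finset ℕ :=
  ![{1,2,4,12,13,14,17,18}, {1,2,8,11,14,16,17,22}, {1,8,10,11,13,17,18,21},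
    {1,4,11,13,14,16,20,21}, {2,7,8,10,12,17,18,22}]

/-- `Π̃ = span_ℤ{ f_n (n ∉ 𝒪₉); (1/2) Σ_{n ∈ ℋᵢ} f_n (i = 1,…,5) }`. -/
def PiTildeSpan : Submodule ℤ V24 :=
  Submodule.span ℤ
    ({ v | ∃ n : Fin 24, (n : ℕ) + 1 ∉ O9 ∧ v = f24 n } ∪
     { v | ∃ i : Fin 5,
        v = (2 : ℚ)⁻¹ • ∑ n ∈ Finset.univ.filter (fun n : Fin 24 => (n : ℕ) + 1 ∈ Hocts i), f24 n })

/-- The hypercube `𝔽₂⁴`. -/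
abbrev F16 := Fin 4 → ZMod 2

/-- The ambient 16-dimensional rational quadratic space containing the Kummer lattice. -/
abbrev VK := F16 → ℚ

/-- The bilinear form on `VK` with Gram matrix `diag(-2,…,-2)` on the standard basis. -/
def BK (u v : VK) : ℚ := -2 * ∑ a, u a * v a

/-- The exceptional classes `E_a`, `a ∈ 𝔽₂⁴`: the standard basis vectors, of norm `-2`. -/
def EK (a : F16) : VK := fun b => if b = a then 1 else 0

/-- A subset of `𝔽₂⁴` is an affine hyperplane if it is the solution set of a
non-trivial affine-linear equation. -/
def IsAffineHyperplane (H : Finset F16) : Prop :=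
  ∃ (φ : F16 →ₗ[ZMod 2] ZMod 2) (c : ZMod 2), φ ≠ 0 ∧ ∀ a, a ∈ H ↔ φ a = c

/-- The Kummer lattice `Π`, spanned by the `E_a` and the half sums over all affine
hyperplanes of `𝔽₂⁴`. -/
def KummerLat : Submodule ℤ VK :=
  Submodule.span ℤ (Set.range EK ∪
    { v | ∃ H : Finset F16, IsAffineHyperplane H ∧ v = (2 : ℚ)⁻¹ • ∑ a ∈ H, EK a })

/-- Shorthand for a vector in `𝔽₂⁴`. -/
def v4 (a b c d : ZMod 2) : F16 := ![a, b, c, d]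

/-- The labelling map `I` from the complement of `𝒪₉` to the hypercube `𝔽₂⁴`. -/
def Imap : ℕ → F16
  | 1 => v4 0 0 0 0
  | 2 => v4 0 0 1 1
  | 4 => v4 0 1 1 0
  | 7 => v4 1 1 1 1
  | 8 => v4 1 0 0 1
  | 10 => v4 1 1 0 1
  | 11 => v4 1 0 0 0
  | 12 => v4 0 1 1 1
  | 13 => v4 0 1 0 0
  | 14 => v4 0 0 1 0
  | 16 => v4 1 0 1 0
  | 17 => v4 0 0 0 1
  | 18 => v4 0 1 0 1
  | 20 => v4 1 1 1 0
  | 21 => v4 1 1 0 0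
  | 22 => v4 1 0 1 1
  | _ => v4 0 0 0 0

/-!
`I⁻¹ : 𝔽₂⁴ → {1,…,24} \ 𝒪₉` is a bijection, so extending `E_a ↦ f_{I⁻¹ a}` by zero is an
isometry `VK → V24(-1)`. The lattice `Π` is already generated by the `E_a` and the half sums over
the five hyperplanes `I(Hᵢ)`: over `𝔽₂` their indicators span the constants and the coordinate
functions, hence every affine function, so the half sum over any affine hyperplane differs from an
integral combination of these five by an integral vector. As `I⁻¹` carries `I(Hᵢ)` onto `Hᵢ`,
the generators of `Π` are sent onto the generators of `Π̃`.
-/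

open Finset Submodule

section ExtendByZero

variable {R ι κ : Type*} {e : ι → κ}

theorem Function.ExtendByZero.linearMap_single [Semiring R] [DecidableEq ι] [DecidableEq κ]
    (he : e.Injective) (a : ι) (x : R) :
    Function.ExtendByZero.linearMap R e (Pi.single a x) = Pi.single (e a) x := by
  funext k
  by_cases hk : ∃ a', e a' = k
  · obtain ⟨a', rfl⟩ := hk
    simp [he.extend_apply, Pi.single_apply, he.eq_iff]
  · rw [Function.ExtendByZero.linearMap_apply, Function.extend_apply' _ _ _ hk,
      Pi.single_eq_of_ne (fun h => hk ⟨a, h.symm⟩), Pi.zero_apply]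

theorem Function.ExtendByZero.sum_linearMap_mul [CommSemiring R] [Fintype ι]
    [Fintype κ] (he : e.Injective) (u v : ι → R) :
    ∑ k, Function.ExtendByZero.linearMap R e u k * Function.ExtendByZero.linearMap R e v k =
      ∑ i, u i * v i :=
  (Fintype.sum_of_injective e he _ _
    (fun k hk => by simp [Function.extend_apply' _ _ _ hk])
    (fun i => by simp [he.extend_apply])).symm

end ExtendByZero

section HalfSum

variable {α : Type*} [DecidableEq α]

def indicatorMod2 (s : Finset α) : α → ZMod 2 := fun a => if a ∈ s then 1 else 0

def halfSum (s : Finset α) : α → ℚ := (2 : ℚ)⁻¹ • ∑ a ∈ s, Pi.single a 1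

theorem halfSum_apply (s : Finset α) (b : α) : halfSum s b = 2⁻¹ * if b ∈ s then 1 else 0 := by
  simp [halfSum, Finset.sum_apply, Finset.sum_pi_single]

theorem Function.ExtendByZero.linearMap_halfSum {κ : Type*} [DecidableEq κ] {e : α → κ}
    (he : e.Injective) (s : Finset α) :
    Function.ExtendByZero.linearMap ℚ e (halfSum s) = halfSum (s.image e) := by
  simp only [halfSum, map_smul, map_sum, Function.ExtendByZero.linearMap_single he,
    Finset.sum_image fun a _ b _ h => he h]

variable [Fintype α]

theorem mem_span_range_single_of_forall_eq_intCast (v : α → ℚ) (hv : ∀ b, ∃ k : ℤ, v b = k) :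
    v ∈ span ℤ (Set.range fun a => Pi.single a (1 : ℚ)) := by
  choose k hk using hv
  rw [← Finset.univ_sum_single v]
  refine sum_mem fun b _ => ?_
  have : (Pi.single b (k b : ℚ) : α → ℚ) = k b • (Pi.single b 1 : α → ℚ) := by
    ext; simp [Pi.single_apply]
  rw [hk b, this]
  exact smul_mem _ _ (subset_span ⟨b, rfl⟩)

theorem halfSum_mem_span_of_indicatorMod2_mem_span {ι : Type*} [Fintype ι] (H : Finset α)
    (K : ι → Finset α)
    (hH : indicatorMod2 H ∈ span (ZMod 2) (Set.range fun i => indicatorMod2 (K i))) :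
    halfSum H ∈ span ℤ ((Set.range fun a => Pi.single a (1 : ℚ)) ∪ Set.range (halfSum ∘ K)) := by
  obtain ⟨w, hw⟩ := (mem_span_range_iff_exists_fun (ZMod 2)).mp hH
  set c : ι → ℤ := fun i => (w i).val
  have hc : ∀ i, (c i : ZMod 2) = w i := fun i => by simp [c]
  have hintegral : ∀ b, ∃ k : ℤ, (halfSum H - ∑ i, c i • halfSum (K i)) b = k := by
    intro b
    set d : ℤ := (if b ∈ H then 1 else 0) - ∑ i, c i * if b ∈ K i then 1 else 0
    have hd : (d : ZMod 2) = 0 := by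
      have hwb := congrFun hw b
      simp only [Finset.sum_apply, Pi.smul_apply, indicatorMod2, smul_eq_mul] at hwb
      simp only [d, Int.cast_sub, Int.cast_sum, Int.cast_mul, Int.cast_ite, Int.cast_one,
        Int.cast_zero, hc, hwb, sub_self]
    obtain ⟨k, hk⟩ := (ZMod.intCast_zmod_eq_zero_iff_dvd d 2).mp hd
    refine ⟨k, ?_⟩
    have hdq : (d : ℚ) = 2 * k := by exact_mod_cast hk
    simp only [d] at hdq
    push_cast at hdq
    simp only [Pi.sub_apply, Finset.sum_apply, Pi.smul_apply, halfSum_apply]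
    simp only [zsmul_eq_mul, mul_left_comm _ (2⁻¹ : ℚ), ← Finset.mul_sum]
    linarith
  rw [← sub_add_cancel (halfSum H) (∑ i, c i • halfSum (K i))]
  exact add_mem
    (span_mono Set.subset_union_left (mem_span_range_single_of_forall_eq_intCast _ hintegral))
    (sum_mem fun i _ => smul_mem _ _ (subset_span (Or.inr ⟨i, rfl⟩)))

end HalfSum

/-- The hyperplanes `I(H₁), …, I(H₅)`: `{a | a_j = 0}` for `j = 1, …, 4` and `{a | a₄ = 1}`. -/
def coordHyperplane (i : Fin 5) : Finset F16 :=
  univ.filter fun a => a (![0, 1, 2, 3, 3] i) = ![0, 0, 0, 0, 1] i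

theorem ZMod.ite_eq_one_add_add (x c : ZMod 2) :
    (if x = c then 1 else 0 : ZMod 2) = 1 + c + x := by
  revert x c; decide

theorem indicatorMod2_affine_mem_span_coordHyperplane (ℓ : F16 →ₗ[ZMod 2] ZMod 2) (c : ZMod 2) :
    indicatorMod2 (univ.filter fun a => ℓ a = c) ∈
      span (ZMod 2) (Set.range fun i => indicatorMod2 (coordHyperplane i)) := by
  set M := span (ZMod 2) (Set.range fun i => indicatorMod2 (coordHyperplane i))
  have hK : ∀ i, indicatorMod2 (coordHyperplane i) ∈ M := fun i => subset_span ⟨i, rfl⟩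
  have hconst : (fun _ => 1 : F16 → ZMod 2) ∈ M := by
    convert add_mem (hK 3) (hK 4) using 1
    funext a
    simp only [Pi.add_apply, indicatorMod2, coordHyperplane, mem_filter_univ,
      ZMod.ite_eq_one_add_add]
    simp only [Matrix.cons_val]
    grind
  have hcoord : ∀ j : Fin 4, (fun a : F16 => a j) ∈ M := by
    intro j
    convert add_mem hconst (hK j.castSucc) using 1
    funext a
    have hj : (![0, 1, 2, 3, 3] : Fin 5 → Fin 4) j.castSucc = j := by fin_cases j <;> rfl
    have hv : (![0, 0, 0, 0, 1] : Fin 5 → ZMod 2) j.castSucc = 0 := by fin_cases j <;> rfl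
    simp only [Pi.add_apply, indicatorMod2, coordHyperplane, mem_filter_univ, hj, hv,
      ZMod.ite_eq_one_add_add]
    grind
  have hℓ : ⇑ℓ ∈ M := by
    have : ⇑ℓ = ∑ j, (ℓ fun k => if j = k then 1 else 0) • fun a : F16 => a j := by
      funext a
      simp [LinearMap.pi_apply_eq_sum_univ ℓ a, mul_comm]
    rw [this]
    exact sum_mem fun j _ => smul_mem M _ (hcoord j)
  convert add_mem (smul_mem M (1 + c) hconst) hℓ using 1
  funext a
  simp [indicatorMod2, ZMod.ite_eq_one_add_add]

/-- `I⁻¹`, as an index in `Fin 24` (label minus one), tabulated by `a₀ + 2a₁ + 4a₂ + 8a₃`. -/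
def imapInv (a : F16) : Fin 24 :=
  ![0, 10, 12, 20, 13, 15, 3, 19, 16, 7, 17, 9, 1, 21, 11, 6] (finFunctionFinEquiv a)

theorem imapInv_injective : imapInv.Injective := by decide

theorem imapInv_Imap : ∀ n : Fin 24, (n : ℕ) + 1 ∉ O9 → imapInv (Imap ((n : ℕ) + 1)) = n := by
  decide

theorem imapInv_add_one_notMem_O9 : ∀ a, (imapInv a : ℕ) + 1 ∉ O9 := by decide

theorem image_imapInv_coordHyperplane : ∀ i,
    (coordHyperplane i).image imapInv = univ.filter fun n : Fin 24 => (n : ℕ) + 1 ∈ Hocts i := by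
  decide

theorem EK_eq_single : EK = fun a => Pi.single a 1 := by
  funext a b
  simp [EK, Pi.single_apply]

theorem f24_eq_single : f24 = fun n => Pi.single n 1 := by
  funext n i
  simp [f24, Pi.single_apply]

theorem isAffineHyperplane_coordHyperplane (i : Fin 5) :
    IsAffineHyperplane (coordHyperplane i) := by
  refine ⟨LinearMap.proj (![0, 1, 2, 3, 3] i), ![0, 0, 0, 0, 1] i, fun h => ?_, fun a => by
    simp [coordHyperplane]⟩
  simpa using LinearMap.congr_fun h (Pi.single (![0, 1, 2, 3, 3] i) 1)

theorem kummerLat_eq_span_coordHyperplane :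
    KummerLat = span ℤ (Set.range EK ∪ Set.range (halfSum ∘ coordHyperplane)) := by
  rw [KummerLat, EK_eq_single]
  apply le_antisymm
  · rw [span_le]
    rintro v (hv | ⟨H, ⟨ℓ, c, -, hH⟩, rfl⟩)
    · exact subset_span (Or.inl hv)
    · obtain rfl : H = univ.filter fun a => ℓ a = c := by ext a; simp [hH]
      exact halfSum_mem_span_of_indicatorMod2_mem_span _ _
        (indicatorMod2_affine_mem_span_coordHyperplane ℓ c)
  · rw [span_le]
    rintro v (hv | ⟨i, rfl⟩)
    · exact subset_span (Or.inl hv)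
    · exact subset_span (Or.inr ⟨_, isAffineHyperplane_coordHyperplane i, rfl⟩)

noncomputable def kummerEmbedding : VK →ₗ[ℚ] V24 := Function.ExtendByZero.linearMap ℚ imapInv

theorem kummerEmbedding_EK (a : F16) : kummerEmbedding (EK a) = f24 (imapInv a) := by
  rw [EK_eq_single, f24_eq_single]
  exact Function.ExtendByZero.linearMap_single imapInv_injective a 1

theorem kummerEmbedding_halfSum_coordHyperplane (i : Fin 5) :
    kummerEmbedding (halfSum (coordHyperplane i)) =
      (2 : ℚ)⁻¹ • ∑ n ∈ univ.filter (fun n : Fin 24 => (n : ℕ) + 1 ∈ Hocts i), f24 n := by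
  rw [kummerEmbedding, Function.ExtendByZero.linearMap_halfSum imapInv_injective,
    image_imapInv_coordHyperplane, f24_eq_single, halfSum]

theorem image_range_EK :
    kummerEmbedding '' Set.range EK = {v | ∃ n : Fin 24, (n : ℕ) + 1 ∉ O9 ∧ v = f24 n} := by
  ext v
  constructor
  · rintro ⟨_, ⟨a, rfl⟩, rfl⟩
    exact ⟨imapInv a, imapInv_add_one_notMem_O9 a, kummerEmbedding_EK a⟩
  · rintro ⟨n, hn, rfl⟩
    exact ⟨_, ⟨Imap ((n : ℕ) + 1), rfl⟩, by rw [kummerEmbedding_EK, imapInv_Imap n hn]⟩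

theorem image_range_halfSum_coordHyperplane :
    kummerEmbedding '' Set.range (halfSum ∘ coordHyperplane) = {v | ∃ i : Fin 5,
      v = (2 : ℚ)⁻¹ • ∑ n ∈ univ.filter (fun n : Fin 24 => (n : ℕ) + 1 ∈ Hocts i), f24 n} := by
  ext v
  constructor
  · rintro ⟨_, ⟨i, rfl⟩, rfl⟩
    exact ⟨i, kummerEmbedding_halfSum_coordHyperplane i⟩
  · rintro ⟨i, rfl⟩
    exact ⟨_, ⟨i, rfl⟩, kummerEmbedding_halfSum_coordHyperplane i⟩

theorem image_kummerLat_eq_piTildeSpan : kummerEmbedding '' KummerLat = PiTildeSpan := by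
  have := map_span (kummerEmbedding.restrictScalars ℤ)
    (Set.range EK ∪ Set.range (halfSum ∘ coordHyperplane))
  rw [← kummerLat_eq_span_coordHyperplane, LinearMap.coe_restrictScalars, Set.image_union,
    image_range_EK, image_range_halfSum_coordHyperplane] at this
  rw [PiTildeSpan, ← this, map_coe, LinearMap.coe_restrictScalars]

/-- The assignment `E_{I(n)} ↦ f_n` (for `n` in the complement of the octad `𝒪₉`)
extends to an isometry from the Kummer lattice `Π` onto `Π̃(-1)`. -/
theorem kummer_isometric_to_piTilde :
    ∃ φ : VK →ₗ[ℚ] V24,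
      (∀ n : Fin 24, (n : ℕ) + 1 ∉ O9 → φ (EK (Imap ((n : ℕ) + 1))) = f24 n) ∧
      Set.BijOn φ ↑KummerLat ↑PiTildeSpan ∧
      (∀ u ∈ KummerLat, ∀ v ∈ KummerLat, B24 (φ u) (φ v) = - BK u v) := by
  refine ⟨kummerEmbedding, fun n hn => ?_, ?_, fun u _ v _ => ?_⟩
  · rw [kummerEmbedding_EK, imapInv_Imap n hn]
  · rw [← image_kummerLat_eq_piTildeSpan]
    exact (Function.extend_injective imapInv_injective 0).injOn.bijOn_image
  · rw [B24, BK, kummerEmbedding, Function.ExtendByZero.sum_linearMap_mul imapInv_injective]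
    ring
end

section
/- Any two distinct octads of the extended binary Golay code intersect in exactly 0, 2, or 4 coordinates. -/
/-! If `u ≠ v` are octads, then `u + v` is a nonzero codeword whose support is the symmetric
difference of the two octads, so it has weight `16 - 2 |u ∩ v|`. Every nonzero Golay codeword has
weight `8`, `12`, `16` or `24` (the code is doubly even of minimum weight `8`), which leaves
`|u ∩ v| ∈ {0, 2, 4}`. The weight distribution is checked by enumerating the `2 ^ 12` codewords
as xor-combinations of the 24-bit masks of the basis sets. -/

open Finset

lemma weight_add_add_two_mul_card_inter (u v : Fin 24 → ZMod 2) :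
    weight (u + v) + 2 * #{i | u i ≠ 0 ∧ v i ≠ 0} = weight u + weight v := by
  simp only [weight, card_filter, mul_sum, ← sum_add_distrib]
  refine sum_congr rfl fun i _ => ?_
  have hpointwise : ∀ a b : ZMod 2, ((if a + b ≠ 0 then 1 else 0) + 2 * if a ≠ 0 ∧ b ≠ 0 then 1 else 0) =
      (if a ≠ 0 then 1 else 0) + (if b ≠ 0 then 1 else 0) := by decide
  exact hpointwise (u i) (v i)

lemma weight_eq_zero_iff {w : Fin 24 → ZMod 2} : weight w = 0 ↔ w = 0 := by
  simp [weight, filter_eq_empty_iff, funext_iff]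

section Masks

variable {n : ℕ}

def maskVec (m : ℕ) : Fin n → ZMod 2 := fun j => if m.testBit j then 1 else 0

lemma maskVec_zero : (maskVec 0 : Fin n → ZMod 2) = 0 := by
  funext j
  simp [maskVec]

lemma maskVec_xor (a b : ℕ) : (maskVec (a ^^^ b) : Fin n → ZMod 2) = maskVec a + maskVec b := by
  funext j
  simp only [maskVec, Nat.testBit_xor, Pi.add_apply]
  cases a.testBit j <;> cases b.testBit j <;> decide

def xorSpan : List ℕ → List ℕ
  | [] => [0]
  | m :: ms => let s := xorSpan ms; s ++ s.map (m ^^^ ·)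

lemma exists_mem_xorSpan_of_mem_span (ms : List ℕ) {w : Fin n → ZMod 2}
    (hw : w ∈ Submodule.span (ZMod 2) {v | v ∈ ms.map maskVec}) :
    ∃ m ∈ xorSpan ms, maskVec m = w := by
  induction ms generalizing w with
  | nil =>
    simp only [List.map_nil, List.not_mem_nil, Set.ofPred_false, Submodule.span_empty,
      Submodule.mem_bot] at hw
    exact ⟨0, by simp [xorSpan], hw ▸ maskVec_zero⟩
  | cons m ms ih =>
    have hinsert : {v | v ∈ (m :: ms).map maskVec} =
        insert (maskVec m : Fin n → ZMod 2) {v | v ∈ ms.map maskVec} := by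
      ext v
      simp [eq_comm]
    rw [hinsert, Submodule.mem_span_insert] at hw
    obtain ⟨a, z, hz, rfl⟩ := hw
    obtain ⟨x, hx, rfl⟩ := ih hz
    rcases (show ∀ a : ZMod 2, a = 0 ∨ a = 1 by decide) a with rfl | rfl
    · exact ⟨x, by simp [xorSpan, hx], by simp⟩
    · exact ⟨m ^^^ x, by simp [xorSpan, hx], by simp [maskVec_xor]⟩

end Masks

-- Label `k` becomes bit `k - 1`, matching the convention of `indic`.
def labelMask (s : Finset ℕ) : ℕ := ∑ k ∈ s, 2 ^ (k - 1)

def golayMasks : List ℕ := List.ofFn fun i => labelMask (golayBasisSets i)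

lemma indic_golayBasisSets_eq_maskVec (i : Fin 12) :
    indic (golayBasisSets i) = maskVec (labelMask (golayBasisSets i)) := by
  revert i
  decide

lemma golayCode_eq_span_maskVec :
    golayCode = Submodule.span (ZMod 2) {v | v ∈ golayMasks.map maskVec} := by
  rw [golayCode, golayMasks, List.map_ofFn]
  congr 1
  ext v
  simp only [Set.mem_range, Set.mem_ofPred_eq, List.mem_ofFn, Function.comp_apply,
    indic_golayBasisSets_eq_maskVec]

lemma weight_maskVec (m : ℕ) : weight (maskVec m) = #{j ∈ range 24 | m.testBit j} := by
  rw [weight, card_filter, card_filter,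
    ← Fin.sum_univ_eq_sum_range (fun j => if m.testBit j then 1 else 0)]
  refine sum_congr rfl fun j _ => ?_
  by_cases h : m.testBit j <;> simp [maskVec, h]

set_option maxRecDepth 10000 in
lemma card_testBit_mem_of_mem_xorSpan_golayMasks :
    ∀ m ∈ xorSpan golayMasks, #{j ∈ range 24 | m.testBit j} ∈ ({0, 8, 12, 16, 24} : Finset ℕ) := by
  decide +kernel

lemma weight_mem_of_mem_golayCode {w : Fin 24 → ZMod 2} (hw : w ∈ golayCode) :
    weight w ∈ ({0, 8, 12, 16, 24} : Finset ℕ) := by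
  rw [golayCode_eq_span_maskVec] at hw
  obtain ⟨m, hm, rfl⟩ := exists_mem_xorSpan_of_mem_span golayMasks hw
  rw [weight_maskVec]
  exact card_testBit_mem_of_mem_xorSpan_golayMasks m hm

/-- Any two distinct octads (weight-8 codewords) of the extended binary Golay code
intersect in exactly 0, 2 or 4 coordinates. -/
theorem octad_intersections :
    ∀ u ∈ golayCode, ∀ v ∈ golayCode, u ≠ v → weight u = 8 → weight v = 8 →
      (Finset.univ.filter fun i => u i ≠ 0 ∧ v i ≠ 0).card ∈ ({0, 2, 4} : Set ℕ) := by
  intro u hu v hv huv hu8 hv8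
  have hsum := weight_add_add_two_mul_card_inter u v
  have hweight := weight_mem_of_mem_golayCode (add_mem hu hv)
  have hne : weight (u + v) ≠ 0 := by
    rwa [Ne, weight_eq_zero_iff, ← CharTwo.sub_eq_add, sub_eq_zero]
  simp only [mem_insert, mem_singleton] at hweight
  simp only [Set.mem_insert_iff, Set.mem_singleton_iff]
  omega
end
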